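/- Let {x_k} be generated by the TRFD algorithm, assume each component F_i is convex, h is monotone, f has a global minimizer x* on Ω with D_0 := sup{‖x − x*‖_p : x ∈ Ω, f(x) ≤ f(x_0)} < ∞, and Δ_* ≥ D_0. Define the hitting times T_f(ε) := inf{k ∈ ℕ : f(x_k) − f(x*) ≤ Δ_* ε} and T_g(ε) := inf{k ∈ ℕ : ψ_{p,Δ_*}(x_k) ≤ ε}. Then T_f(ε) ≤ T_g(ε). -/

import Mathlib

open scoped ENNReal

noncomputable section

/-- The `p`-norm on `ℝ^n`, for `p ∈ [1,∞]`. -/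
def pNorm (p : ℝ≥0∞) {n : ℕ} (x : Fin n → ℝ) : ℝ :=
  if p = ∞ then ⨆ i, |x i| else (∑ i, |x i| ^ p.toReal) ^ (1 / p.toReal)

/-- The Euclidean norm on `ℝ^n`. -/
def eucNorm {n : ℕ} (x : Fin n → ℝ) : ℝ := Real.sqrt (∑ i, x i ^ 2)

/-- The operator norm of a matrix, induced by Euclidean norms. -/
def opNorm2 {m n : ℕ} (A : Matrix (Fin m) (Fin n) ℝ) : ℝ :=
  sSup ((fun v => eucNorm (A.mulVec v)) '' {v | eucNorm v ≤ 1})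

/-- Forward finite-difference approximation of the Jacobian of `F` at `x` with stepsize `τ`:
the `j`-th column is `(F (x + τ e_j) - F x) / τ`. -/
def fdMatrix {n m : ℕ} (F : (Fin n → ℝ) → (Fin m → ℝ)) (x : Fin n → ℝ) (τ : ℝ) :
    Matrix (Fin m) (Fin n) ℝ :=
  Matrix.of fun i j => (F (x + Pi.single j τ) i - F x i) / τ

/-- Stationarity measure `ψ_{p,r}(x)`. -/
def psi {n m : ℕ} (Ω : Set (Fin n → ℝ)) (F : (Fin n → ℝ) → (Fin m → ℝ))
    (h : (Fin m → ℝ) → ℝ) (J : (Fin n → ℝ) → Matrix (Fin m) (Fin n) ℝ)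
    (p : ℝ≥0∞) (r : ℝ) (x : Fin n → ℝ) : ℝ :=
  r⁻¹ * (h (F x) -
    sInf ((fun s => h (F x + (J x).mulVec s)) '' {s | x + s ∈ Ω ∧ pNorm p s ≤ r}))

/-- Approximate stationarity measure `η_{p,r}(x; A)`. -/
def eta {n m : ℕ} (Ω : Set (Fin n → ℝ)) (F : (Fin n → ℝ) → (Fin m → ℝ))
    (h : (Fin m → ℝ) → ℝ) (p : ℝ≥0∞) (r : ℝ) (x : Fin n → ℝ)
    (A : Matrix (Fin m) (Fin n) ℝ) : ℝ :=
  r⁻¹ * (h (F x) -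
    sInf ((fun s => h (F x + A.mulVec s)) '' {s | x + s ∈ Ω ∧ pNorm p s ≤ r}))

/-- The TRFD algorithm: `x`, `τ`, `Δ`, `A`, `d`, `ρ` are the iterates, finite-difference
stepsizes, trust-region radii, finite-difference Jacobian approximations, trial steps and
ratios generated by TRFD with parameters `ε, σ, α, θ, Δstar` from the point `x 0`. -/
def TRFDrun {n m : ℕ} (Ω : Set (Fin n → ℝ)) (F : (Fin n → ℝ) → (Fin m → ℝ))
    (h : (Fin m → ℝ) → ℝ) (p : ℝ≥0∞)
    (Lh cpm cnp ε σ α θ Δstar : ℝ)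
    (x : ℕ → Fin n → ℝ) (τ Δ : ℕ → ℝ) (A : ℕ → Matrix (Fin m) (Fin n) ℝ)
    (d : ℕ → Fin n → ℝ) (ρ : ℕ → ℝ) : Prop :=
  x 0 ∈ Ω ∧
  τ 0 = ε / (Lh * σ * cpm * cnp * Real.sqrt n) ∧
  τ 0 * Real.sqrt n ≤ Δ 0 ∧ Δ 0 ≤ Δstar ∧
  (∀ k, A k = fdMatrix F (x k) (τ k)) ∧
  (∀ k,
    -- unsuccessful iteration of type I
    (eta Ω F h p Δstar (x k) (A k) < ε / 2 ∧
      x (k + 1) = x k ∧ Δ (k + 1) = Δ k ∧ τ (k + 1) = τ k / 2) ∨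
    (ε / 2 ≤ eta Ω F h p Δstar (x k) (A k) ∧
      -- the trial step is feasible and achieves a `θ`-fraction of the optimal model decrease
      pNorm p (d k) ≤ Δ k ∧ x k + d k ∈ Ω ∧
      θ * (h (F (x k)) -
          sInf ((fun s => h (F (x k) + (A k).mulVec s)) ''
            {s | x k + s ∈ Ω ∧ pNorm p s ≤ Δ k})) ≤
        h (F (x k)) - h (F (x k) + (A k).mulVec (d k)) ∧
      ρ k = (h (F (x k)) - h (F (x k + d k))) /
            (h (F (x k)) - h (F (x k) + (A k).mulVec (d k))) ∧
      -- successful iteration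
      ((α ≤ ρ k ∧ x (k + 1) = x k + d k ∧ Δ (k + 1) = min (2 * Δ k) Δstar ∧
          τ (k + 1) = τ k) ∨
      -- unsuccessful iteration of type II
       (ρ k < α ∧ τ k * Real.sqrt n ≤ Δ k / 2 ∧
          x (k + 1) = x k ∧ Δ (k + 1) = Δ k / 2 ∧ τ (k + 1) = τ k) ∨
      -- unsuccessful iteration of type III
       (ρ k < α ∧ Δ k / 2 < τ k * Real.sqrt n ∧
          x (k + 1) = x k ∧ Δ (k + 1) = Δ k / 2 ∧ τ (k + 1) = τ k / 2))))

/-!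
The objective never increases along a TRFD run, so every iterate `x k` lies in the level set of
`x 0` and hence within `D₀ ≤ Δstar` of `xstar`; thus `xstar - x k` is a feasible step of the model
defining `psi`. Convexity of each `F i` gives `F (x k) + J (x k) (xstar - x k) ≤ F xstar`
componentwise, and monotonicity of `h` turns this into
`Δstar * psi (x k) ≥ h (F (x k)) - h (F xstar)`. So every index with `psi ≤ ε` has gap
`≤ Δstar * ε`, and the first index with small gap comes no later than the first with small `psi`.
-/

open Set

section pNorm

variable {n : ℕ}

lemma pNorm_nonneg (p : ℝ≥0∞) (v : Fin n → ℝ) : 0 ≤ pNorm p v := by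
  unfold pNorm
  split_ifs
  · exact Real.iSup_nonneg fun i => abs_nonneg _
  · positivity

lemma pNorm_sub_comm (p : ℝ≥0∞) (v w : Fin n → ℝ) : pNorm p (v - w) = pNorm p (w - v) := by
  simp only [pNorm, Pi.sub_apply, abs_sub_comm]

lemma pNorm_zero {p : ℝ≥0∞} (hp : p ≠ 0) : pNorm p (0 : Fin n → ℝ) = 0 := by
  unfold pNorm
  split_ifs with htop
  · simp
  · have ht : 0 < p.toReal := ENNReal.toReal_pos hp htop
    simp [Real.zero_rpow ht.ne', Real.zero_rpow (inv_pos.mpr ht).ne']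

lemma abs_le_pNorm {p : ℝ≥0∞} (hp : p ≠ 0) (v : Fin n → ℝ) (j : Fin n) : |v j| ≤ pNorm p v := by
  unfold pNorm
  split_ifs with htop
  · exact le_ciSup (f := fun i => |v i|) (Finite.bddAbove_range _) j
  · have ht : 0 < p.toReal := ENNReal.toReal_pos hp htop
    calc |v j| = (|v j| ^ p.toReal) ^ (1 / p.toReal) := by
          rw [one_div, Real.rpow_rpow_inv (abs_nonneg _) ht.ne']
      _ ≤ (∑ i, |v i| ^ p.toReal) ^ (1 / p.toReal) := by
          gcongr
          exact Finset.single_le_sum (f := fun i => |v i| ^ p.toReal)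
            (fun i _ => by positivity) (Finset.mem_univ j)

lemma abs_mulVec_le_pNorm_mul {m : ℕ} {p : ℝ≥0∞} (hp : p ≠ 0) (B : Matrix (Fin m) (Fin n) ℝ)
    (v : Fin n → ℝ) (i : Fin m) : |B.mulVec v i| ≤ pNorm p v * ∑ j, |B i j| := by
  calc |B.mulVec v i| = |∑ j, B i j * v j| := rfl
    _ ≤ ∑ j, |B i j| * |v j| := by
        simpa only [abs_mul] using Finset.abs_sum_le_sum_abs (fun j => B i j * v j) Finset.univ
    _ ≤ ∑ j, |B i j| * pNorm p v := by gcongr with j; exact abs_le_pNorm hp v j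
    _ = pNorm p v * ∑ j, |B i j| := by rw [← Finset.sum_mul, mul_comm]

end pNorm

lemma bddBelow_image_add_mulVec {n m : ℕ} {p : ℝ≥0∞} (hp : p ≠ 0) {h : (Fin m → ℝ) → ℝ}
    (hmono : Monotone h) (y : Fin m → ℝ) (B : Matrix (Fin m) (Fin n) ℝ)
    {S : Set (Fin n → ℝ)} {r : ℝ} (hS : ∀ s ∈ S, pNorm p s ≤ r) :
    BddBelow ((fun s => h (y + B.mulVec s)) '' S) := by
  refine ⟨h fun i => y i - r * ∑ j, |B i j|, ?_⟩
  rintro _ ⟨s, hs, rfl⟩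
  refine hmono fun i => ?_
  have hBs := (neg_abs_le (B.mulVec s i)).trans' <| neg_le_neg <|
    (abs_mulVec_le_pNorm_mul hp B s i).trans <|
      mul_le_mul_of_nonneg_right (hS s hs) (Finset.sum_nonneg fun j _ => abs_nonneg (B i j))
  simp only [Pi.add_apply]
  linarith

lemma ConvexOn.add_le_of_hasFDerivAt {E : Type*} [NormedAddCommGroup E] [NormedSpace ℝ E]
    {g : E → ℝ} (hg : ConvexOn ℝ univ g) {L : E →L[ℝ] ℝ} {x : E} (hd : HasFDerivAt g L x)
    (y : E) : g x + L (y - x) ≤ g y := by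
  let φ : ℝ → E := AffineMap.lineMap x y
  have hφ : ConvexOn ℝ univ (g ∘ φ) := hg.comp_affineMap _
  have hφ' : HasDerivAt (g ∘ φ) (L (y - x)) 0 :=
    hd.comp_hasDerivAt_of_eq (0 : ℝ) AffineMap.hasDerivAt_lineMap (by simp [φ])
  have := hφ.le_slope_of_hasDerivAt (mem_univ 0) (mem_univ 1) one_pos hφ'
  simp only [slope_def_field, Function.comp_apply, φ, AffineMap.lineMap_apply_zero,
    AffineMap.lineMap_apply_one, sub_zero, div_one] at this
  linarith

lemma add_mulVec_sub_le_of_convexOn {n m : ℕ} {F : (Fin n → ℝ) → (Fin m → ℝ)}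
    {J : Matrix (Fin m) (Fin n) ℝ} {y : Fin n → ℝ}
    (hJ : HasFDerivAt F (LinearMap.toContinuousLinearMap (Matrix.mulVecLin J)) y)
    (hFconv : ∀ i, ConvexOn ℝ univ (fun y => F y i)) (z : Fin n → ℝ) (i : Fin m) :
    F y i + J.mulVec (z - y) i ≤ F z i := by
  simpa using (hFconv i).add_le_of_hasFDerivAt (hasFDerivAt_pi'.1 hJ i) z

lemma sub_le_mul_psi {n m : ℕ} {Ω : Set (Fin n → ℝ)} {F : (Fin n → ℝ) → (Fin m → ℝ)}
    {h : (Fin m → ℝ) → ℝ} {J : (Fin n → ℝ) → Matrix (Fin m) (Fin n) ℝ} {p : ℝ≥0∞} {r : ℝ}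
    {y z : Fin n → ℝ} (hp : p ≠ 0) (hmono : Monotone h)
    (hJ : HasFDerivAt F (LinearMap.toContinuousLinearMap (Matrix.mulVecLin (J y))) y)
    (hFconv : ∀ i, ConvexOn ℝ univ (fun y => F y i)) (hz : z ∈ Ω)
    (hzy : pNorm p (z - y) ≤ r) (hr : 0 < r) :
    h (F y) - h (F z) ≤ r * psi Ω F h J p r y := by
  have hmem : h (F y + (J y).mulVec (z - y)) ∈
      (fun s => h (F y + (J y).mulVec s)) '' {s | y + s ∈ Ω ∧ pNorm p s ≤ r} :=
    ⟨z - y, ⟨by simpa using hz, hzy⟩, rfl⟩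
  have hinf := (csInf_le (bddBelow_image_add_mulVec hp hmono _ _ fun s hs => hs.2) hmem).trans
    (hmono fun i => add_mulVec_sub_le_of_convexOn hJ hFconv z i)
  rw [psi, ← mul_assoc, mul_inv_cancel₀ hr.ne', one_mul]
  linarith

namespace TRFDrun

variable {n m : ℕ} {Ω : Set (Fin n → ℝ)} {F : (Fin n → ℝ) → (Fin m → ℝ)}
  {h : (Fin m → ℝ) → ℝ} {p : ℝ≥0∞} {Lh cpm cnp ε σ α θ Δstar : ℝ} {x : ℕ → Fin n → ℝ}
  {τ Δ : ℕ → ℝ} {A : ℕ → Matrix (Fin m) (Fin n) ℝ} {d : ℕ → Fin n → ℝ} {ρ : ℕ → ℝ}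

lemma Δstar_pos (hrun : TRFDrun Ω F h p Lh cpm cnp ε σ α θ Δstar x τ Δ A d ρ) (hn : 1 ≤ n)
    (hLh : 0 < Lh) (hcpm : 0 < cpm) (hcnp : 0 < cnp) (hε : 0 < ε) (hσ : 0 < σ) :
    0 < Δstar := by
  obtain ⟨-, hτ₀, hτΔ₀, hΔ₀, -⟩ := hrun
  have : 0 < Real.sqrt n := Real.sqrt_pos.2 (by exact_mod_cast hn)
  rw [hτ₀] at hτΔ₀
  exact (by positivity : (0 : ℝ) < _).trans_le (hτΔ₀.trans hΔ₀)

lemma mem (hrun : TRFDrun Ω F h p Lh cpm cnp ε σ α θ Δstar x τ Δ A d ρ) (k : ℕ) : x k ∈ Ω := by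
  induction k with
  | zero => exact hrun.1
  | succ k ih =>
    rcases hrun.2.2.2.2.2 k with ⟨-, hx, -⟩ |
      ⟨-, -, hdΩ, -, -, ⟨-, hx, -⟩ | ⟨-, -, hx, -⟩ | ⟨-, -, hx, -⟩⟩ <;> rw [hx] <;> assumption

lemma objective_succ_le (hrun : TRFDrun Ω F h p Lh cpm cnp ε σ α θ Δstar x τ Δ A d ρ)
    (hp : p ≠ 0) (hmono : Monotone h) (hα : 0 < α) (hθ : 0 < θ) (k : ℕ) :
    h (F (x (k + 1))) ≤ h (F (x k)) := by
  rcases hrun.2.2.2.2.2 k with ⟨-, hx, -⟩ |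
    ⟨-, hdΔ, -, hdec, hρ, ⟨hαρ, hx, -⟩ | ⟨-, -, hx, -⟩ | ⟨-, -, hx, -⟩⟩ <;> rw [hx]
  -- the zero step is feasible, so the model decrease is nonnegative and `ρ k ≥ α > 0` forces
  -- an actual decrease
  have hinf : sInf ((fun s => h (F (x k) + (A k).mulVec s)) ''
      {s | x k + s ∈ Ω ∧ pNorm p s ≤ Δ k}) ≤ h (F (x k)) :=
    csInf_le (bddBelow_image_add_mulVec hp hmono _ _ fun s hs => hs.2)
      ⟨0, ⟨by simpa using hrun.mem k, (pNorm_zero hp).trans_le ((pNorm_nonneg p _).trans hdΔ)⟩,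
        by simp⟩
  have hmodel : 0 ≤ h (F (x k)) - h (F (x k) + (A k).mulVec (d k)) :=
    (mul_nonneg hθ.le (sub_nonneg.2 hinf)).trans hdec
  have hρpos : 0 < ρ k := hα.trans_le hαρ
  rw [hρ, div_pos_iff] at hρpos
  rcases hρpos with ⟨hactual, -⟩ | ⟨-, hneg⟩
  · linarith
  · exact absurd hneg hmodel.not_gt

lemma objective_antitone (hrun : TRFDrun Ω F h p Lh cpm cnp ε σ α θ Δstar x τ Δ A d ρ)
    (hp : p ≠ 0) (hmono : Monotone h) (hα : 0 < α) (hθ : 0 < θ) :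
    Antitone fun k => h (F (x k)) :=
  antitone_nat_of_succ_le (hrun.objective_succ_le hp hmono hα hθ)

end TRFDrun

theorem stmt18_general
    {n m : ℕ} (hn : 1 ≤ n) (p : ℝ≥0∞) (hp : 1 ≤ p)
    (Ω : Set (Fin n → ℝ))
    (F : (Fin n → ℝ) → (Fin m → ℝ)) (J : (Fin n → ℝ) → Matrix (Fin m) (Fin n) ℝ)
    (hJ : ∀ y, HasFDerivAt F (LinearMap.toContinuousLinearMap (Matrix.mulVecLin (J y))) y)
    (h : (Fin m → ℝ) → ℝ)
    (Lh : ℝ) (hLh : 0 < Lh)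
    (cnp cpm : ℝ) (hcnp1 : 1 ≤ cnp) (hcpm1 : 1 ≤ cpm)
    (ε σ α θ Δstar : ℝ) (hε : 0 < ε) (hσ : 0 < σ)
    (hα0 : 0 < α) (hθ0 : 0 < θ)
    (x : ℕ → Fin n → ℝ) (τ Δ : ℕ → ℝ) (A : ℕ → Matrix (Fin m) (Fin n) ℝ)
    (d : ℕ → Fin n → ℝ) (ρ : ℕ → ℝ)
    (hrun : TRFDrun Ω F h p Lh cpm cnp ε σ α θ Δstar x τ Δ A d ρ)
    (hFconv : ∀ i, ConvexOn ℝ Set.univ (fun y => F y i))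
    (hmono : ∀ u v : Fin m → ℝ, (∀ i, u i ≤ v i) → h u ≤ h v)
    (xstar : Fin n → ℝ) (hxstarΩ : xstar ∈ Ω)
    (D₀ : ℝ) (hD₀ : ∀ y ∈ Ω, h (F y) ≤ h (F (x 0)) → pNorm p (y - xstar) ≤ D₀)
    (hΔstarD₀ : D₀ ≤ Δstar)
    :
    sInf {c : ℕ∞ | ∃ k : ℕ, c = k ∧ h (F (x k)) - h (F xstar) ≤ Δstar * ε} ≤
    sInf {c : ℕ∞ | ∃ k : ℕ, c = k ∧ psi Ω F h J p Δstar (x k) ≤ ε} := by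
  have hp0 : p ≠ 0 := (zero_lt_one.trans_le hp).ne'
  have hmono' : Monotone h := fun u v => hmono u v
  have hΔstar : 0 < Δstar := hrun.Δstar_pos hn hLh (by linarith) (by linarith) hε hσ
  refine sInf_le_sInf ?_
  rintro _ ⟨k, rfl, hψ⟩
  refine ⟨k, rfl, ?_⟩
  have hdist : pNorm p (xstar - x k) ≤ Δstar := by
    rw [pNorm_sub_comm]
    exact (hD₀ _ (hrun.mem k)
      (hrun.objective_antitone hp0 hmono' hα0 hθ0 (Nat.zero_le k))).trans hΔstarD₀
  calc h (F (x k)) - h (F xstar) ≤ Δstar * psi Ω F h J p Δstar (x k) :=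
        sub_le_mul_psi hp0 hmono' (hJ (x k)) hFconv hxstarΩ hdist hΔstar
    _ ≤ Δstar * ε := by gcongr

/-- Lemma 3.13: the hitting time T_f is at most T_g (in ℕ∞). -/
theorem stmt18
    {n m : ℕ} (hn : 1 ≤ n) (hm : 1 ≤ m) (p : ℝ≥0∞) (hp : 1 ≤ p)
    (Ω : Set (Fin n → ℝ)) (hΩne : Ω.Nonempty) (hΩcl : IsClosed Ω) (hΩcv : Convex ℝ Ω)
    (F : (Fin n → ℝ) → (Fin m → ℝ)) (J : (Fin n → ℝ) → Matrix (Fin m) (Fin n) ℝ)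
    (hJ : ∀ y, HasFDerivAt F (LinearMap.toContinuousLinearMap (Matrix.mulVecLin (J y))) y)
    (LJ : ℝ) (hLJ : 0 < LJ)
    (hJLip : ∀ y z, opNorm2 (J y - J z) ≤ LJ * eucNorm (y - z))
    (h : (Fin m → ℝ) → ℝ) (hconv : ConvexOn ℝ Set.univ h)
    (Lh : ℝ) (hLh : 0 < Lh)
    (hhLip : ∀ z w, |h z - h w| ≤ Lh * pNorm p (z - w))
    (cnp cpm : ℝ) (hcnp1 : 1 ≤ cnp) (hcpm1 : 1 ≤ cpm)
    (hcnp : ∀ v : Fin n → ℝ, eucNorm v ≤ cnp * pNorm p v)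
    (hcpm : ∀ z : Fin m → ℝ, pNorm p z ≤ cpm * eucNorm z)
    (ε σ α θ Δstar : ℝ) (hε : 0 < ε) (hσ : 0 < σ)
    (hα0 : 0 < α) (hα1 : α < 1) (hθ0 : 0 < θ) (hθ1 : θ ≤ 1)
    (x : ℕ → Fin n → ℝ) (τ Δ : ℕ → ℝ) (A : ℕ → Matrix (Fin m) (Fin n) ℝ)
    (d : ℕ → Fin n → ℝ) (ρ : ℕ → ℝ)
    (hrun : TRFDrun Ω F h p Lh cpm cnp ε σ α θ Δstar x τ Δ A d ρ)
    (hFconv : ∀ i, ConvexOn ℝ Set.univ (fun y => F y i))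
    (hmono : ∀ u v : Fin m → ℝ, (∀ i, u i ≤ v i) → h u ≤ h v)
    (xstar : Fin n → ℝ) (hxstarΩ : xstar ∈ Ω)
    (hxstarmin : ∀ y ∈ Ω, h (F xstar) ≤ h (F y))
    (D₀ : ℝ) (hD₀ : ∀ y ∈ Ω, h (F y) ≤ h (F (x 0)) → pNorm p (y - xstar) ≤ D₀)
    (hΔstarD₀ : D₀ ≤ Δstar)
    :
    sInf {c : ℕ∞ | ∃ k : ℕ, c = k ∧ h (F (x k)) - h (F xstar) ≤ Δstar * ε} ≤
    sInf {c : ℕ∞ | ∃ k : ℕ, c = k ∧ psi Ω F h J p Δstar (x k) ≤ ε} :=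
  stmt18_general hn p hp Ω F J hJ h Lh hLh cnp cpm hcnp1 hcpm1 ε σ α θ Δstar hε hσ hα0 hθ0 x τ Δ A d
    ρ hrun hFconv hmono xstar hxstarΩ D₀ hD₀ hΔstarD₀
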